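/- (Algebraic core of Proposition 3.4, prop_redu_end.) Let A and B be abelian groups such that the endomorphism ring End(B) is commutative (i.e. e₁ ∘ e₂ = e₂ ∘ e₁ for all additive endomorphisms e₁, e₂ of B), and such that every additive endomorphism of B that factors through A is nilpotent. If f is a bijective additive endomorphism of A × B whose block component f_AA is an automorphism of A, then the block component f_BB is an automorphism of B. -/

import Mathlib

/-- The block components of an additive endomorphism of `A × B`. -/
def blockAA {A B : Type*} [AddCommGroup A] [AddCommGroup B] (f : A × B →+ A × B) : A →+ A :=
  (AddMonoidHom.fst A B).comp (f.comp (AddMonoidHom.inl A B))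

def blockBB {A B : Type*} [AddCommGroup A] [AddCommGroup B] (f : A × B →+ A × B) : B →+ B :=
  (AddMonoidHom.snd A B).comp (f.comp (AddMonoidHom.inr A B))

/-- View an additive endomorphism as an element of the endomorphism monoid, so that
powers make sense. -/
def toEnd {B : Type*} [AddCommGroup B] (e : B →+ B) : AddMonoid.End B := e

/-- An additive endomorphism is nilpotent if `e^k = 0` for some `k ≥ 1`. -/
def IsNilpotentEnd {B : Type*} [AddCommGroup B] (e : B →+ B) : Prop :=
  ∃ k : ℕ, 1 ≤ k ∧ toEnd e ^ k = 0

/-! Writing `g = f⁻¹`, the `BB` block of `g ∘ f = 1` reads `g_BB f_BB + g_BA f_AB = 1`. The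
correction `g_BA f_AB` factors through `A`, hence is nilpotent, so `g_BB f_BB` is a unit of
`End(B)`; symmetrically so is `f_BB g_BB`, and therefore `f_BB` is bijective. -/

theorem AddMonoid.End.bijective_of_isUnit {M : Type*} [AddZeroClass M] {e : AddMonoid.End M}
    (h : IsUnit e) : Function.Bijective e := by
  obtain ⟨u, rfl⟩ := h
  exact Function.bijective_iff_has_inverse.mpr
    ⟨u.inv, fun x => DFunLike.congr_fun u.inv_mul x, fun x => DFunLike.congr_fun u.mul_inv x⟩

section

variable {A B : Type*} [AddCommGroup A] [AddCommGroup B]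

theorem IsNilpotentEnd.isNilpotent {e : B →+ B} (h : IsNilpotentEnd e) : IsNilpotent (toEnd e) :=
  let ⟨k, _, hk⟩ := h
  ⟨k, hk⟩

theorem bijective_of_add_eq_id_of_isNilpotentEnd {d n : B →+ B} (hn : IsNilpotentEnd n)
    (h : d + n = AddMonoidHom.id B) : Function.Bijective d :=
  have hd : toEnd d = 1 - toEnd n := eq_sub_of_add_eq h
  AddMonoid.End.bijective_of_isUnit (e := toEnd d) (hd ▸ hn.isNilpotent.isUnit_one_sub)

def blockAB (f : A × B →+ A × B) : B →+ A :=
  (AddMonoidHom.fst A B).comp (f.comp (AddMonoidHom.inr A B))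

def blockBA (f : A × B →+ A × B) : A →+ B :=
  (AddMonoidHom.snd A B).comp (f.comp (AddMonoidHom.inl A B))

@[simp]
theorem blockBB_id : blockBB (AddMonoidHom.id (A × B)) = AddMonoidHom.id B := rfl

theorem blockBB_comp (f g : A × B →+ A × B) :
    blockBB (g.comp f) = (blockBB g).comp (blockBB f) + (blockBA g).comp (blockAB f) := by
  ext b
  change (g (f (0, b))).2 = (g (0, (f (0, b)).2)).2 + (g ((f (0, b)).1, 0)).2
  rw [← Prod.snd_add, ← map_add, Prod.mk_add_mk, zero_add, add_zero]

theorem bijective_blockBB_comp_of_comp_eq_id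
    (hnil : ∀ e : B →+ B, (∃ (u : B →+ A) (v : A →+ B), e = v.comp u) → IsNilpotentEnd e)
    {f g : A × B →+ A × B} (h : g.comp f = AddMonoidHom.id (A × B)) :
    Function.Bijective ((blockBB g).comp (blockBB f)) :=
  bijective_of_add_eq_id_of_isNilpotentEnd (hnil _ ⟨_, _, rfl⟩)
    (by rw [← blockBB_comp, h, blockBB_id])

end

theorem blockBB_bijective_of_commutative_nilpotent_general {A B : Type*}
    [AddCommGroup A] [AddCommGroup B]
    (hnil : ∀ e : B →+ B, (∃ (u : B →+ A) (v : A →+ B), e = v.comp u) → IsNilpotentEnd e)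
    (f : A × B →+ A × B) (hf : Function.Bijective f) :
    Function.Bijective (blockBB f) := by
  let e := AddEquiv.ofBijective f hf
  have hgf : e.symm.toAddMonoidHom.comp f = AddMonoidHom.id _ :=
    AddMonoidHom.ext e.symm_apply_apply
  have hfg : f.comp e.symm.toAddMonoidHom = AddMonoidHom.id _ :=
    AddMonoidHom.ext e.apply_symm_apply
  exact ⟨(bijective_blockBB_comp_of_comp_eq_id hnil hgf).injective.of_comp (f := blockBB _),
    (bijective_blockBB_comp_of_comp_eq_id hnil hfg).surjective.of_comp (g := blockBB _)⟩

/-- Algebraic core of Proposition 3.4 (`prop_redu_end`): suppose `End(B)` is commutative and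
every additive endomorphism of `B` factoring through `A` is nilpotent.  If `f` is a bijective
additive endomorphism of `A × B` whose block `f_AA` is an automorphism of `A`, then `f_BB`
is an automorphism of `B`. -/
theorem blockBB_bijective_of_commutative_nilpotent {A B : Type*}
    [AddCommGroup A] [AddCommGroup B]
    (hcomm : ∀ e₁ e₂ : B →+ B, e₁.comp e₂ = e₂.comp e₁)
    (hnil : ∀ e : B →+ B, (∃ (u : B →+ A) (v : A →+ B), e = v.comp u) → IsNilpotentEnd e)
    (f : A × B →+ A × B) (hf : Function.Bijective f)
    (hAA : Function.Bijective (blockAA f)) :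
    Function.Bijective (blockBB f) :=
  blockBB_bijective_of_commutative_nilpotent_general hnil f hf
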